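/- arXiv:1509.08453 — 2 statements merged into one kernel-verified Lean document; each statement's English description precedes it below -/
import Mathlib

section
/- Let C be a triangulated category equipped with a weight structure w, let m ≤ l be integers, and let g : M → M' be a morphism in C. Then for any m-weight decomposition w_{≤m}M → M → w_{≥m+1}M → (w_{≤m}M)[1] of M and any l-weight decomposition w_{≤l}M' → M' → w_{≥l+1}M' → (w_{≤l}M')[1] of M' there exist morphisms h : w_{≤m}M → w_{≤l}M' and j : w_{≥m+1}M → w_{≥l+1}M' such that (h, g, j) is a morphism of distinguished triangles. Moreover, if m < l then the pair (h, j) with this property is unique. -/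
open CategoryTheory CategoryTheory.Limits CategoryTheory.Pretriangulated ZeroObject

universe v u

variable (C : Type u) [Category.{v} C] [HasZeroObject C] [Preadditive C] [HasShift C ℤ]
  [∀ n : ℤ, (shiftFunctor C n).Additive] [Pretriangulated C]

/-- A weight structure on a triangulated category `C`: a pair of retract-closed classes
`le = C_{w≤0}` and `ge = C_{w≥0}` satisfying semi-invariance with respect to translations,
orthogonality, and the existence of weight decompositions. -/
structure WeightStructure where
  /-- the class `C_{w≤0}` -/
  le : Set C
  /-- the class `C_{w≥0}` -/
  ge : Set C
  /-- `C_{w≤0}` is closed under retracts -/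
  le_retract : ∀ ⦃X Y : C⦄ (i : X ⟶ Y) (r : Y ⟶ X), i ≫ r = 𝟙 X → le Y → le X
  /-- `C_{w≥0}` is closed under retracts -/
  ge_retract : ∀ ⦃X Y : C⦄ (i : X ⟶ Y) (r : Y ⟶ X), i ≫ r = 𝟙 X → ge Y → ge X
  /-- `C_{w≤0} ⊆ C_{w≤0}[1]`, i.e. `X ∈ C_{w≤0} → X[-1] ∈ C_{w≤0}` -/
  le_shift : ∀ ⦃X : C⦄, le X → le ((shiftFunctor C (-1 : ℤ)).obj X)
  /-- `C_{w≥0}[1] ⊆ C_{w≥0}`, i.e. `X ∈ C_{w≥0} → X[1] ∈ C_{w≥0}` -/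
  ge_shift : ∀ ⦃X : C⦄, ge X → ge ((shiftFunctor C (1 : ℤ)).obj X)
  /-- orthogonality: `Hom(X, Y[1]) = 0` for `X ∈ C_{w≤0}`, `Y ∈ C_{w≥0}` -/
  orth : ∀ ⦃X Y : C⦄, le X → ge Y → ∀ f : X ⟶ (shiftFunctor C (1 : ℤ)).obj Y, f = 0
  /-- existence of weight decompositions -/
  decomp : ∀ M : C, ∃ (X Y : C) (f : X ⟶ M) (g : M ⟶ Y)
      (h : Y ⟶ (shiftFunctor C (1 : ℤ)).obj X),
      Triangle.mk f g h ∈ (distTriang C) ∧ le X ∧ ge ((shiftFunctor C (-1 : ℤ)).obj Y)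

variable {C}

namespace WeightStructure

/-- `X ∈ C_{w≤i} = C_{w≤0}[i]`, i.e. `X[-i] ∈ C_{w≤0}`. -/
def leDeg (w : WeightStructure C) (i : ℤ) (X : C) : Prop :=
  w.le ((shiftFunctor C (-i)).obj X)

/-- `X ∈ C_{w≥i} = C_{w≥0}[i]`, i.e. `X[-i] ∈ C_{w≥0}`. -/
def geDeg (w : WeightStructure C) (i : ℤ) (X : C) : Prop :=
  w.ge ((shiftFunctor C (-i)).obj X)

/-- The triangle `A → M → B → A[1]` is an `m`-weight decomposition of `M`:
it is distinguished, `A ∈ C_{w≤m}` and `B ∈ C_{w≥m+1}`. -/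
def IsWeightDecomp (w : WeightStructure C) (m : ℤ) {A M B : C}
    (f : A ⟶ M) (g : M ⟶ B) (h : B ⟶ (shiftFunctor C (1 : ℤ)).obj A) : Prop :=
  Triangle.mk f g h ∈ (distTriang C) ∧ w.leDeg m A ∧ w.geDeg (m + 1) B

/-- `g : M ⟶ N` kills weights `m,…,n`: there exist an `n`-weight decomposition of `M` and an
`(m-1)`-weight decomposition of `N` such that the composite `w_{≤n}M → M → N → w_{≥m}N` is `0`. -/
def KillsWeights (w : WeightStructure C) (m n : ℤ) {M N : C} (g : M ⟶ N) : Prop :=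
  ∃ (A B A' B' : C) (f : A ⟶ M) (p : M ⟶ B) (δ : B ⟶ (shiftFunctor C (1 : ℤ)).obj A)
    (f' : A' ⟶ N) (p' : N ⟶ B') (δ' : B' ⟶ (shiftFunctor C (1 : ℤ)).obj A'),
    w.IsWeightDecomp n f p δ ∧ w.IsWeightDecomp (m - 1) f' p' δ' ∧ f ≫ g ≫ p' = 0

/-- `M` is without weights `m,…,n` if `𝟙 M` kills weights `m,…,n`. -/
def WithoutWeights (w : WeightStructure C) (m n : ℤ) (M : C) : Prop :=
  w.KillsWeights m n (𝟙 M)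

end WeightStructure

/-! Weights of `A` are `≤ m` and those of `B'` are `≥ l + 1 > m`, so by orthogonality the
composite `A → M → M' → B'` vanishes; hence `f ≫ g` lifts through `f'`, and the lift completes to
a morphism of triangles. The differences of two such extensions factor through maps `A → B'[-1]` and
`A[1] → B'`, which again vanish by orthogonality once `m < l`. -/

namespace CategoryTheory.Pretriangulated

lemma exists_hom₁_hom₃_of_comp_eq_zero {T T' : Triangle C} (hT : T ∈ distTriang C)
    (hT' : T' ∈ distTriang C) (g : T.obj₂ ⟶ T'.obj₂) (hg : T.mor₁ ≫ g ≫ T'.mor₂ = 0) :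
    ∃ (h : T.obj₁ ⟶ T'.obj₁) (j : T.obj₃ ⟶ T'.obj₃),
      T.mor₁ ≫ g = h ≫ T'.mor₁ ∧ T.mor₂ ≫ j = g ≫ T'.mor₂ ∧
      T.mor₃ ≫ h⟦(1 : ℤ)⟧' = j ≫ T'.mor₃ := by
  obtain ⟨h, hh⟩ := T'.coyoneda_exact₂ hT' (T.mor₁ ≫ g) (by rwa [Category.assoc])
  obtain ⟨j, hj₂, hj₃⟩ := complete_distinguished_triangle_morphism T T' hT hT' h g hh
  exact ⟨h, j, hh, hj₂, hj₃⟩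

lemma eq_of_comp_mor₂_eq {T : Triangle C} (hT : T ∈ distTriang C) {X : C}
    (hX : ∀ a : X ⟶ T.obj₁, a = 0) {h₁ h₂ : X ⟶ T.obj₂}
    (e : h₁ ≫ T.mor₂ = h₂ ≫ T.mor₂) : h₁ = h₂ := by
  obtain ⟨a, ha⟩ := T.coyoneda_exact₂ hT (h₁ - h₂) (by rw [Preadditive.sub_comp, e, sub_self])
  rwa [hX a, zero_comp, sub_eq_zero] at ha

lemma eq_of_mor₁_comp_eq {T : Triangle C} (hT : T ∈ distTriang C) {Y : C}
    (hY : ∀ a : T.obj₃ ⟶ Y, a = 0) {j₁ j₂ : T.obj₂ ⟶ Y}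
    (e : T.mor₁ ≫ j₁ = T.mor₁ ≫ j₂) : j₁ = j₂ := by
  obtain ⟨a, ha⟩ := T.yoneda_exact₂ hT (j₁ - j₂) (by rw [Preadditive.comp_sub, e, sub_self])
  rwa [hY a, comp_zero, sub_eq_zero] at ha

end CategoryTheory.Pretriangulated

namespace WeightStructure

variable (w : WeightStructure C)

lemma le_of_iso {X Y : C} (e : X ≅ Y) (h : w.le X) : w.le Y :=
  w.le_retract e.inv e.hom (by simp) h

lemma ge_of_iso {X Y : C} (e : X ≅ Y) (h : w.ge X) : w.ge Y :=
  w.ge_retract e.inv e.hom (by simp) h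

variable {w}

lemma leDeg_shift {a : ℤ} {X : C} (h : w.leDeg a X) (n b : ℤ) (hb : a + n = b) :
    w.leDeg b (X⟦n⟧) :=
  w.le_of_iso ((shiftFunctorAdd' C n (-b) (-a) (by omega)).app X) h

lemma geDeg_shift {a : ℤ} {X : C} (h : w.geDeg a X) (n b : ℤ) (hb : a + n = b) :
    w.geDeg b (X⟦n⟧) :=
  w.ge_of_iso ((shiftFunctorAdd' C n (-b) (-a) (by omega)).app X) h

lemma geDeg_of_geDeg_add_one {a : ℤ} {X : C} (h : w.geDeg (a + 1) X) : w.geDeg a X :=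
  w.ge_of_iso ((shiftFunctorAdd' C (-(a + 1)) 1 (-a) (by ring)).app X).symm (w.ge_shift h)

lemma geDeg_of_le {a b : ℤ} (hab : a ≤ b) {X : C} (h : w.geDeg b X) : w.geDeg a X := by
  induction a, hab using Int.leInductionDown with
  | base => exact h
  | pred a _ ih => exact geDeg_of_geDeg_add_one (by rwa [sub_add_cancel])

lemma hom_eq_zero_of_leDeg_of_geDeg {a b : ℤ} (hab : a < b) {X Y : C}
    (hX : w.leDeg a X) (hY : w.geDeg b Y) (φ : X ⟶ Y) : φ = 0 := by
  let e : Y⟦-a⟧ ≅ (Y⟦-(a + 1)⟧)⟦(1 : ℤ)⟧ := (shiftFunctorAdd' C (-(a + 1)) 1 (-a) (by ring)).app Y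
  have hφe : φ⟦-a⟧' ≫ e.hom = 0 := w.orth hX (geDeg_of_le (by omega) hY) _
  exact (shiftFunctor C (-a)).map_injective <| by
    rw [(Preadditive.IsIso.comp_right_eq_zero _ _).1 hφe, Functor.map_zero]

end WeightStructure

/-- Proposition 1.2.1(5): any `g : M ⟶ M'` extends to a morphism of distinguished triangles
between any `m`-weight decomposition of `M` and any `l`-weight decomposition of `M'` (for
`m ≤ l`); the extension is unique if `m < l`. -/
theorem exists_triangle_morphism_of_weightDecomp (w : WeightStructure C) (m l : ℤ) (hml : m ≤ l)
    {M M' : C} (g : M ⟶ M')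
    {A B : C} (f : A ⟶ M) (p : M ⟶ B) (δ : B ⟶ (shiftFunctor C (1 : ℤ)).obj A)
    (hd : w.IsWeightDecomp m f p δ)
    {A' B' : C} (f' : A' ⟶ M') (p' : M' ⟶ B') (δ' : B' ⟶ (shiftFunctor C (1 : ℤ)).obj A')
    (hd' : w.IsWeightDecomp l f' p' δ') :
    (∃ (h : A ⟶ A') (j : B ⟶ B'),
      f ≫ g = h ≫ f' ∧ p ≫ j = g ≫ p' ∧
      δ ≫ (shiftFunctor C (1 : ℤ)).map h = j ≫ δ') ∧
    (m < l → ∀ (h₁ h₂ : A ⟶ A') (j₁ j₂ : B ⟶ B'),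
      (f ≫ g = h₁ ≫ f' ∧ p ≫ j₁ = g ≫ p' ∧
        δ ≫ (shiftFunctor C (1 : ℤ)).map h₁ = j₁ ≫ δ') →
      (f ≫ g = h₂ ≫ f' ∧ p ≫ j₂ = g ≫ p' ∧
        δ ≫ (shiftFunctor C (1 : ℤ)).map h₂ = j₂ ≫ δ') →
      h₁ = h₂ ∧ j₁ = j₂) := by
  obtain ⟨hT, hA, -⟩ := hd
  obtain ⟨hT', -, hB'⟩ := hd'
  refine ⟨exists_hom₁_hom₃_of_comp_eq_zero hT hT' g ?_, ?_⟩
  · show f ≫ g ≫ p' = 0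
    rw [← Category.assoc]
    exact w.hom_eq_zero_of_leDeg_of_geDeg (by omega) hA hB' _
  rintro hlt h₁ h₂ j₁ j₂ ⟨e₁, e₂, -⟩ ⟨e₁', e₂', -⟩
  exact ⟨eq_of_comp_mor₂_eq (inv_rot_of_distTriang _ hT')
      (w.hom_eq_zero_of_leDeg_of_geDeg hlt hA (WeightStructure.geDeg_shift hB' (-1) l (by ring)))
      (e₁.symm.trans e₁'),
    eq_of_mor₁_comp_eq (rot_of_distTriang _ hT)
      (w.hom_eq_zero_of_leDeg_of_geDeg (by omega)
        (WeightStructure.leDeg_shift hA 1 (m + 1) rfl) hB')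
      (e₂.trans e₂'.symm)⟩
end

section
/- Let C be a triangulated category equipped with a weight structure w whose heart is Karoubian, in the sense that for every object X ∈ C_{w=0} every idempotent endomorphism of X splits in C. Let m ≤ n be integers. If an object O of C is without weights m,…,n, then there exists a distinguished triangle X → O → Y → X[1] with X ∈ C_{w≤m−1} and Y ∈ C_{w≥n+1}. -/
open CategoryTheory CategoryTheory.Limits CategoryTheory.Pretriangulated ZeroObject

universe v u

variable (C : Type u) [Category.{v} C] [HasZeroObject C] [Preadditive C] [HasShift C ℤ]
  [∀ n : ℤ, (shiftFunctor C n).Additive] [Pretriangulated C]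

variable {C}

/-!
Starting from the `n`-weight decomposition `A → O → B`, we lower the weights of `A` one step at a
time, keeping `B` in `C_{w≥n+1}` and keeping the composite `A → O → w_{≥m}O` zero. At a level
`k ≥ m`, the map `A → O` factors through `w_{≤m-1}O` and back, which gives `u : A → A` with
`u f = f` vanishing on the weight-`k` quotient `b : A → Ā`. Then `1 - u` factors through `B[-1]`,
producing `g : Ā → A` with `g f = 0` and `b g b = b`, so `g b` is an idempotent of the heart
object `Ā`. Splitting it splits off a direct summand of `A` killed by `f`; the complementary
summand `Q` maps to zero in `Ā`, hence is a retract of `w_{≤k-1}A`, and the cone of `Q → O` is a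
retract of `B`.
-/

open CategoryTheory.Category CategoryTheory.Preadditive

namespace CategoryTheory.Pretriangulated

lemma exists_complement_of_retraction {Y A : C} {ι : Y ⟶ A} {ρ : A ⟶ Y} (h : ι ≫ ρ = 𝟙 Y) :
    ∃ (Q : C) (π : A ⟶ Q) (σ : Q ⟶ A),
      σ ≫ π = 𝟙 Q ∧ π ≫ σ = 𝟙 A - ρ ≫ ι ∧ σ ≫ ρ = 0 := by
  obtain ⟨Q, π, δ, hT⟩ := distinguished_cocone_triangle ι
  have : Epi π :=
    Triangle.epi₂ _ hT (Triangle.mor₃_eq_zero_of_mono₁ _ hT (SplitMono.mono ⟨ρ, h⟩))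
  obtain ⟨σ : Q ⟶ A, hσ : 𝟙 A - ρ ≫ ι = π ≫ σ⟩ := Triangle.yoneda_exact₂ _ hT (𝟙 A - ρ ≫ ι)
    (by change ι ≫ _ = 0; rw [comp_sub, comp_id, reassoc_of% h, sub_self])
  have hιπ : ι ≫ π = 0 := comp_distTriang_mor_zero₁₂ _ hT
  have hσπ : σ ≫ π = 𝟙 Q := by
    rw [← cancel_epi π, ← reassoc_of% hσ]
    simp [hιπ]
  refine ⟨Q, π, σ, hσπ, hσ.symm, ?_⟩
  rw [← id_comp (σ ≫ ρ), ← hσπ, assoc, ← reassoc_of% hσ]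
  simp [h]

lemma distinguished_of_iso₂ {X Y Z M : C} {f : X ⟶ Y} {g : Y ⟶ Z} {h : Z ⟶ X⟦(1 : ℤ)⟧}
    (hT : Triangle.mk f g h ∈ distTriang C) (e : Y ≅ M) :
    Triangle.mk (f ≫ e.hom) (e.inv ≫ g) h ∈ distTriang C :=
  isomorphic_distinguished _ hT _
    (Triangle.isoMk _ _ (Iso.refl X) e.symm (Iso.refl Z)
      (show (f ≫ e.hom) ≫ e.inv = 𝟙 X ≫ f by simp) (show (e.inv ≫ g) ≫ 𝟙 Z = e.inv ≫ g by simp)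
      (show h ≫ (𝟙 X)⟦(1 : ℤ)⟧' = 𝟙 Z ≫ h by simp))

lemma nonempty_retract_obj₃ {T₁ T₂ : Triangle C} (h₁ : T₁ ∈ distTriang C)
    (h₂ : T₂ ∈ distTriang C) (i₁ : T₁.obj₁ ⟶ T₂.obj₁) (r₁ : T₂.obj₁ ⟶ T₁.obj₁)
    (i₂ : T₁.obj₂ ⟶ T₂.obj₂) (r₂ : T₂.obj₂ ⟶ T₁.obj₂) (hi : T₁.mor₁ ≫ i₂ = i₁ ≫ T₂.mor₁)
    (hr : T₂.mor₁ ≫ r₂ = r₁ ≫ T₁.mor₁) (e₁ : i₁ ≫ r₁ = 𝟙 _) (e₂ : i₂ ≫ r₂ = 𝟙 _) :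
    Nonempty (Retract T₁.obj₃ T₂.obj₃) := by
  obtain ⟨i₃, hi₂, hi₃⟩ := complete_distinguished_triangle_morphism T₁ T₂ h₁ h₂ i₁ i₂ hi
  obtain ⟨r₃, hr₂, hr₃⟩ := complete_distinguished_triangle_morphism T₂ T₁ h₂ h₁ r₁ r₂ hr
  have : IsIso (i₃ ≫ r₃) := isIso₃_of_isIso₁₂
    (Triangle.homMk _ _ i₁ i₂ i₃ hi hi₂ hi₃ ≫ Triangle.homMk _ _ r₁ r₂ r₃ hr hr₂ hr₃) h₁ h₁
    (by change IsIso (i₁ ≫ r₁); rw [e₁]; infer_instance)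
    (by change IsIso (i₂ ≫ r₂); rw [e₂]; infer_instance)
  exact ⟨⟨i₃, r₃ ≫ inv (i₃ ≫ r₃), by rw [← assoc, IsIso.hom_inv_id]⟩⟩

end CategoryTheory.Pretriangulated

namespace WeightStructure

variable (w : WeightStructure C)

lemma le_of_retract {X Y : C} (e : Retract X Y) (h : w.le Y) : w.le X :=
  w.le_retract e.i e.r e.retract h

lemma ge_of_retract {X Y : C} (e : Retract X Y) (h : w.ge Y) : w.ge X :=
  w.ge_retract e.i e.r e.retract h

lemma leDeg_of_retract {i : ℤ} {X Y : C} (e : Retract X Y) (h : w.leDeg i Y) : w.leDeg i X :=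
  w.le_of_retract (e.map (shiftFunctor C (-i))) h

lemma geDeg_of_retract {i : ℤ} {X Y : C} (e : Retract X Y) (h : w.geDeg i Y) : w.geDeg i X :=
  w.ge_of_retract (e.map (shiftFunctor C (-i))) h

lemma le_shift_of_nonpos {X : C} (h : w.le X) {a : ℤ} (ha : a ≤ 0) : w.le (X⟦a⟧) := by
  induction a, ha using Int.leInductionDown with
  | base => exact w.le_of_retract (Retract.ofIso ((shiftFunctorZero C ℤ).app X)) h
  | pred a _ ih =>
    exact w.le_of_retract (Retract.ofIso ((shiftFunctorAdd' C a (-1) (a - 1) (by omega)).app X))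
      (w.le_shift ih)

lemma ge_shift_of_nonneg {X : C} (h : w.ge X) {a : ℤ} (ha : 0 ≤ a) : w.ge (X⟦a⟧) := by
  induction a, ha using Int.leInduction with
  | base => exact w.ge_of_retract (Retract.ofIso ((shiftFunctorZero C ℤ).app X)) h
  | succ a _ ih =>
    exact w.ge_of_retract (Retract.ofIso ((shiftFunctorAdd' C a 1 (a + 1) rfl).app X))
      (w.ge_shift ih)

lemma leDeg_shift_s18 {X : C} {i : ℤ} (h : w.leDeg i X) (j : ℤ) {k : ℤ} (hk : i + j = k) :
    w.leDeg k (X⟦j⟧) :=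
  w.le_of_retract (Retract.ofIso ((shiftFunctorAdd' C j (-k) (-i) (by omega)).symm.app X)) h

lemma geDeg_shift_s18 {X : C} {i : ℤ} (h : w.geDeg i X) (j : ℤ) {k : ℤ} (hk : i + j = k) :
    w.geDeg k (X⟦j⟧) :=
  w.ge_of_retract (Retract.ofIso ((shiftFunctorAdd' C j (-k) (-i) (by omega)).symm.app X)) h

lemma leDeg_mono {X : C} {i j : ℤ} (h : w.leDeg i X) (hij : i ≤ j) : w.leDeg j X :=
  w.le_of_retract (Retract.ofIso ((shiftFunctorAdd' C (-i) (i - j) (-j) (by ring)).app X))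
    (w.le_shift_of_nonpos h (by omega))

lemma geDeg_mono {X : C} {i j : ℤ} (h : w.geDeg i X) (hji : j ≤ i) : w.geDeg j X :=
  w.ge_of_retract (Retract.ofIso ((shiftFunctorAdd' C (-i) (i - j) (-j) (by ring)).app X))
    (w.ge_shift_of_nonneg h (by omega))

lemma hom_eq_zero {X Y : C} {i j : ℤ} (hij : i < j) (hX : w.leDeg i X) (hY : w.geDeg j Y)
    (f : X ⟶ Y) : f = 0 := by
  have h := w.orth hX (w.geDeg_mono hY (show i + 1 ≤ j by omega))
    (f⟦-i⟧' ≫ ((shiftFunctorAdd' C (-(i + 1)) 1 (-i) (by ring)).app Y).hom)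
  apply (shiftFunctor C (-i)).map_injective
  rwa [Preadditive.IsIso.comp_right_eq_zero, ← Functor.map_zero (shiftFunctor C (-i)) X Y] at h

lemma exists_isWeightDecomp (k : ℤ) (M : C) :
    ∃ (X Y : C) (f : X ⟶ M) (g : M ⟶ Y) (h : Y ⟶ X⟦(1 : ℤ)⟧), w.IsWeightDecomp k f g h := by
  obtain ⟨X, Y, f, g, h, hT, hX, hY⟩ := w.decomp (M⟦-k⟧)
  refine ⟨_, _, _, _, _, distinguished_of_iso₂ (Triangle.shift_distinguished _ hT k)
    ((shiftFunctorCompIsoId C (-k) k (neg_add_cancel k)).app M), ?_, ?_⟩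
  · exact w.le_of_retract (Retract.ofIso ((shiftFunctorCompIsoId C k (-k) (by ring)).app X)) hX
  · exact w.ge_of_retract
      (Retract.ofIso ((shiftFunctorAdd' C k (-(k + 1)) (-1) (by ring)).symm.app Y)) hY

lemma leDeg_ext₂ {i : ℤ} (T : Triangle C) (hT : T ∈ distTriang C)
    (h₁ : w.leDeg i T.obj₁) (h₃ : w.leDeg i T.obj₃) : w.leDeg i T.obj₂ := by
  obtain ⟨P, Q, a, b, d, hTP, hP, hQ⟩ := w.exists_isWeightDecomp i T.obj₂
  obtain ⟨c, hc⟩ := Triangle.yoneda_exact₂ _ hT b (w.hom_eq_zero (by omega) h₁ hQ _)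
  have hb : b = 0 := by rw [hc, w.hom_eq_zero (by omega) h₃ hQ c, comp_zero]
  obtain ⟨r, hr⟩ :=
    Triangle.coyoneda_exact₂ _ hTP (𝟙 T.obj₂) (by change 𝟙 _ ≫ b = 0; rw [id_comp, hb])
  exact w.leDeg_of_retract ⟨r, a, hr.symm⟩ hP

def HeartKaroubian : Prop :=
  ∀ X : C, w.le X → w.ge X → ∀ e : X ⟶ X, e ≫ e = e →
    ∃ (Y : C) (r : X ⟶ Y) (s : Y ⟶ X), s ≫ r = 𝟙 Y ∧ r ≫ s = e

variable {w}

lemma HeartKaroubian.exists_split (hkar : w.HeartKaroubian) {k : ℤ} {X : C}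
    (h₁ : w.leDeg k X) (h₂ : w.geDeg k X) (e : X ⟶ X) (he : e ≫ e = e) :
    ∃ (Y : C) (r : X ⟶ Y) (s : Y ⟶ X), s ≫ r = 𝟙 Y ∧ r ≫ s = e := by
  obtain ⟨Y, r, s, hsr, hrs⟩ := hkar _ h₁ h₂ (e⟦-k⟧') (by rw [← Functor.map_comp, he])
  let E := (shiftFunctorCompIsoId C (-k) k (neg_add_cancel k)).app X
  refine ⟨Y⟦k⟧, E.inv ≫ r⟦k⟧', s⟦k⟧' ≫ E.hom, ?_, ?_⟩
  · rw [assoc, Iso.hom_inv_id_assoc, ← Functor.map_comp, hsr, CategoryTheory.Functor.map_id]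
  · simp [E, ← Functor.map_comp_assoc, hrs]

lemma exists_innerInverse {i j : ℤ} (hij : i + 1 < j) {O A B A₀ Ā : C} {f : A ⟶ O} {p : O ⟶ B}
    {δ : B ⟶ A⟦(1 : ℤ)⟧} (hT : Triangle.mk f p δ ∈ distTriang C) (hB : w.geDeg j B)
    {a : A₀ ⟶ A} {b : A ⟶ Ā} {d : Ā ⟶ A₀⟦(1 : ℤ)⟧} (hTa : Triangle.mk a b d ∈ distTriang C)
    (hA₀ : w.leDeg i A₀) (u : A ⟶ A) (huf : u ≫ f = f) (hub : u ≫ b = 0) :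
    ∃ g : Ā ⟶ A, g ≫ f = 0 ∧ b ≫ g ≫ b = b := by
  let c : B⟦(-1 : ℤ)⟧ ⟶ A := (Triangle.mk f p δ).invRotate.mor₁
  have hcf : c ≫ f = 0 := comp_distTriang_mor_zero₁₂ _ (inv_rot_of_distTriang _ hT)
  obtain ⟨γ : A ⟶ B⟦(-1 : ℤ)⟧, hγ : 𝟙 A - u = γ ≫ c⟩ :=
    Triangle.coyoneda_exact₂ _ (inv_rot_of_distTriang _ hT) (𝟙 A - u)
      (by change (𝟙 A - u) ≫ f = 0; rw [sub_comp, id_comp, huf, sub_self])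
  obtain ⟨γ' : Ā ⟶ B⟦(-1 : ℤ)⟧, hγ' : γ = b ≫ γ'⟩ := Triangle.yoneda_exact₂ _ hTa γ
    (w.hom_eq_zero (by omega) hA₀ (w.geDeg_shift_s18 hB (-1) rfl) _)
  refine ⟨γ' ≫ c, by rw [assoc, hcf, comp_zero], ?_⟩
  rw [assoc, ← reassoc_of% hγ', ← reassoc_of% hγ, sub_comp, id_comp, hub, sub_zero]

lemma exists_decomp_leDeg_sub_one (hkar : w.HeartKaroubian) {k l : ℤ} (hkl : k < l)
    {O A B A' : C} {f : A ⟶ O} {p : O ⟶ B} {δ : B ⟶ A⟦(1 : ℤ)⟧}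
    (hT : Triangle.mk f p δ ∈ distTriang C) (hA : w.leDeg k A) (hB : w.geDeg l B) (hA' : w.leDeg (k - 1) A') (α : A ⟶ A') (α' : A' ⟶ A)
    (hα : α ≫ α' ≫ f = f) :
    ∃ (X Y : C) (σ : X ⟶ A) (p' : O ⟶ Y) (δ' : Y ⟶ X⟦(1 : ℤ)⟧),
      Triangle.mk (σ ≫ f) p' δ' ∈ distTriang C ∧ w.leDeg (k - 1) X ∧ w.geDeg l Y := by
  obtain ⟨A₀, Ā, a, b, d, hTa, hA₀, hĀge⟩ := w.exists_isWeightDecomp (k - 1) A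
  rw [sub_add_cancel] at hĀge
  have hĀle : w.leDeg k Ā :=
    w.leDeg_ext₂ _ (rot_of_distTriang _ hTa) hA (w.leDeg_shift_s18 hA₀ 1 (sub_add_cancel k 1))
  have hub : (α ≫ α') ≫ b = 0 := by
    rw [assoc, w.hom_eq_zero (by omega) hA' hĀge (α' ≫ b), comp_zero]
  obtain ⟨g, hgf, hbgb⟩ :=
    exists_innerInverse (by omega) hT hB hTa hA₀ (α ≫ α') (by rw [assoc, hα]) hub
  obtain ⟨Y₀, r, s, hsr, hrs⟩ := hkar.exists_split hĀle hĀge (g ≫ b) (by rw [assoc, hbgb])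
  have hιρ : (s ≫ g) ≫ (b ≫ r) = 𝟙 Y₀ := by
    rw [assoc, ← assoc g, ← hrs, ← assoc, ← assoc, hsr, id_comp, hsr]
  obtain ⟨Q, π, σ, hσπ, hπσ, hσρ⟩ := exists_complement_of_retraction hιρ
  have hσb : σ ≫ b = 0 := by
    have hb : b = (b ≫ r) ≫ s := by rw [assoc, hrs, hbgb]
    rw [hb, ← assoc, hσρ, zero_comp]
  obtain ⟨τ : Q ⟶ A₀, hτ : σ = τ ≫ a⟩ := Triangle.coyoneda_exact₂ _ hTa σ hσb
  have hπσf : π ≫ σ ≫ f = f := by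
    rw [← assoc, hπσ]
    simp [hgf]
  obtain ⟨Y, p', δ', hTY⟩ := distinguished_cocone_triangle (σ ≫ f)
  obtain ⟨e⟩ := nonempty_retract_obj₃ hTY hT σ π (𝟙 O) (𝟙 O) (comp_id _)
    (show f ≫ 𝟙 O = π ≫ σ ≫ f by rw [comp_id, hπσf]) hσπ (id_comp _)
  exact ⟨Q, Y, σ, p', δ', hTY, w.leDeg_of_retract ⟨τ, a ≫ π, by rw [← reassoc_of% hτ, hσπ]⟩ hA₀,
    w.geDeg_of_retract e hB⟩

variable (w) in
def HasDecompKilledBy (k l : ℤ) {O B' : C} (p' : O ⟶ B') : Prop :=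
  ∃ (X Y : C) (f : X ⟶ O) (p : O ⟶ Y) (δ : Y ⟶ X⟦(1 : ℤ)⟧),
    Triangle.mk f p δ ∈ distTriang C ∧ w.leDeg k X ∧ w.geDeg l Y ∧ f ≫ p' = 0

section Descent

variable {m l : ℤ} {O A' B' : C} {f' : A' ⟶ O} {p' : O ⟶ B'} {δ' : B' ⟶ A'⟦(1 : ℤ)⟧}

lemma HasDecompKilledBy.sub_one (hkar : w.HeartKaroubian)
    (hT' : Triangle.mk f' p' δ' ∈ distTriang C) (hA' : w.leDeg (m - 1) A') {k : ℤ} (hmk : m ≤ k)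
    (hkl : k < l) (h : w.HasDecompKilledBy k l p') : w.HasDecompKilledBy (k - 1) l p' := by
  obtain ⟨X, Y, f, p, δ, hT, hX, hY, hfp'⟩ := h
  obtain ⟨α : X ⟶ A', hα : f = α ≫ f'⟩ := Triangle.coyoneda_exact₂ _ hT' f hfp'
  obtain ⟨α' : A' ⟶ X, hα' : f' = α' ≫ f⟩ :=
    Triangle.coyoneda_exact₂ _ hT f' (w.hom_eq_zero (by omega) hA' hY _)
  obtain ⟨X₁, Y₁, σ, p₁, δ₁, hT₁, hX₁, hY₁⟩ := exists_decomp_leDeg_sub_one hkar hkl hT hX hY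
    (w.leDeg_mono hA' (by omega)) α α' (by rw [← hα', ← hα])
  exact ⟨X₁, Y₁, σ ≫ f, p₁, δ₁, hT₁, hX₁, hY₁, by rw [assoc, hfp', comp_zero]⟩

lemma HasDecompKilledBy.descend (hkar : w.HeartKaroubian)
    (hT' : Triangle.mk f' p' δ' ∈ distTriang C) (hA' : w.leDeg (m - 1) A') {k : ℤ} (hkl : k < l)
    (h : w.HasDecompKilledBy k l p') : w.HasDecompKilledBy (m - 1) l p' := by
  by_cases hkm : k ≤ m - 1
  · obtain ⟨X, Y, f, p, δ, hT, hX, hY, hfp'⟩ := h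
    exact ⟨X, Y, f, p, δ, hT, w.leDeg_mono hX hkm, hY, hfp'⟩
  · refine Int.leInductionDown (motive := fun j _ ↦ m - 1 ≤ j → w.HasDecompKilledBy j l p')
      (fun _ ↦ h) (fun j _ ih hj ↦ (ih (by omega)).sub_one hkar hT' hA' (by omega) (by omega))
      (m - 1) (by omega) le_rfl

end Descent

end WeightStructure

theorem withoutWeights_has_avoiding_decomposition_of_heart_karoubian_general
    (w : WeightStructure C)
    (hkar : ∀ X : C, w.le X → w.ge X → ∀ e : X ⟶ X, e ≫ e = e →
      ∃ (Y : C) (r : X ⟶ Y) (s : Y ⟶ X), s ≫ r = 𝟙 Y ∧ r ≫ s = e)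
    (m n : ℤ) (O : C) (hO : w.WithoutWeights m n O) :
    ∃ (X Y : C) (f : X ⟶ O) (p : O ⟶ Y) (δ : Y ⟶ (shiftFunctor C (1 : ℤ)).obj X),
      Triangle.mk f p δ ∈ (distTriang C) ∧ w.leDeg (m - 1) X ∧ w.geDeg (n + 1) Y := by
  obtain ⟨A, B, A', B', f, p, δ, f', p', δ', ⟨hT, hA, hB⟩, ⟨hT', hA', -⟩, hfp'⟩ := hO
  rw [id_comp] at hfp'
  have hbase : w.HasDecompKilledBy n (n + 1) p' := ⟨A, B, f, p, δ, hT, hA, hB, hfp'⟩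
  obtain ⟨X, Y, fX, pY, δY, hTX, hX, hY, -⟩ := hbase.descend hkar hT' hA' (lt_add_one n)
  exact ⟨X, Y, fX, pY, δY, hTX, hX, hY⟩

/-- Proposition 3.1.3: if the heart of `w` is Karoubian (idempotent endomorphisms of objects of
`C_{w=0}` split in `C`), then any object `O` without weights `m,…,n` admits a decomposition
avoiding these weights: a distinguished triangle `X → O → Y → X[1]` with `X ∈ C_{w≤m-1}` and
`Y ∈ C_{w≥n+1}`. -/
theorem withoutWeights_has_avoiding_decomposition_of_heart_karoubian
    (w : WeightStructure C)
    (hkar : ∀ X : C, w.le X → w.ge X → ∀ e : X ⟶ X, e ≫ e = e →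
      ∃ (Y : C) (r : X ⟶ Y) (s : Y ⟶ X), s ≫ r = 𝟙 Y ∧ r ≫ s = e)
    (m n : ℤ) (hmn : m ≤ n) (O : C) (hO : w.WithoutWeights m n O) :
    ∃ (X Y : C) (f : X ⟶ O) (p : O ⟶ Y) (δ : Y ⟶ (shiftFunctor C (1 : ℤ)).obj X),
      Triangle.mk f p δ ∈ (distTriang C) ∧ w.leDeg (m - 1) X ∧ w.geDeg (n + 1) Y :=
  withoutWeights_has_avoiding_decomposition_of_heart_karoubian_general w hkar m n O hO
end
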